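/- Let F ⊆ ℝ^d be a non-empty compact set, let Φ = {φ_i}_{i∈Λ} be a similarity IFS which satisfies the strong separation condition, and let T ∈ 𝒯'_Λ be a tree with no leaves such that F = Γ_Φ(T). Then for every microset M of F there exist a set A ∈ cl(S_Φ^T) and an expanding similarity map ψ with Q° ∩ ψ(A) ⊆ M ⊆ Q ∩ ψ(A), where Q° denotes the interior of Q. -/

import Mathlib

open Metric Filter Set
open scoped ENNReal NNReal

noncomputable section

abbrev Euc (d : ℕ) : Type := EuclideanSpace ℝ (Fin d)

/-- `f : ℝ^d → ℝ^d` is a similarity with scaling ratio `r`. -/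
def IsSimilarityWithRatio {d : ℕ} (f : Euc d → Euc d) (r : ℝ) : Prop :=
  ∀ x y : Euc d, dist (f x) (f y) = r * dist x y

/-- `f` is a similarity map (with some positive scaling ratio). -/
def IsSimilarity {d : ℕ} (f : Euc d → Euc d) : Prop :=
  ∃ r : ℝ, 0 < r ∧ IsSimilarityWithRatio f r

/-- `f` is an expanding similarity map (scaling ratio `≥ 1`). -/
def IsExpandingSimilarity {d : ℕ} (f : Euc d → Euc d) : Prop :=
  ∃ r : ℝ, 1 ≤ r ∧ IsSimilarityWithRatio f r

/-- `f` is a contracting similarity map with ratio `r ∈ (0,1)`. -/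
def IsContractingSimilarity {d : ℕ} (f : Euc d → Euc d) (r : ℝ) : Prop :=
  0 < r ∧ r < 1 ∧ IsSimilarityWithRatio f r

/-- The closed unit cube `Q = [0,1]^d`. -/
def unitCube (d : ℕ) : Set (Euc d) := {x | ∀ i, x i ∈ Set.Icc (0:ℝ) 1}

/-- A miniset of `F`: a non-empty set of the form `Q ∩ ψ(F)` with `ψ` an expanding similarity. -/
def IsMiniset {d : ℕ} (F M : Set (Euc d)) : Prop :=
  M.Nonempty ∧ ∃ ψ : Euc d → Euc d, IsExpandingSimilarity ψ ∧ M = unitCube d ∩ ψ '' F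

/-- A microset of `F`: a limit of minisets of `F` in the Hausdorff metric. -/
def IsMicroset {d : ℕ} (F M : Set (Euc d)) : Prop :=
  IsCompact M ∧ M.Nonempty ∧ ∃ A : ℕ → Set (Euc d), (∀ n, IsMiniset F (A n)) ∧
    Tendsto (fun n => hausdorffDist (A n) M) atTop (nhds 0)

/-- A tree with alphabet `Λ`: a prefix-closed set of finite words containing the empty word. -/
def IsTree {Λ : Type} (T : Set (List Λ)) : Prop :=
  ([] : List Λ) ∈ T ∧ ∀ w ∈ T, ∀ v : List Λ, v <+: w → v ∈ T

/-- Every word of `T` has a one-letter extension in `T`. -/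
def HasNoLeaves {Λ : Type} (T : Set (List Λ)) : Prop :=
  ∀ w ∈ T, ∃ a : Λ, w ++ [a] ∈ T

/-- The boundary `∂T` of a tree: infinite words all of whose finite prefixes lie in `T`. -/
def treeBoundary {Λ : Type} (T : Set (List Λ)) : Set (ℕ → Λ) :=
  {x | ∀ n : ℕ, (List.ofFn fun i : Fin n => x i) ∈ T}

/-- The descendant tree `T^v = {w : vw ∈ T}`. -/
def descTree {Λ : Type} (T : Set (List Λ)) (v : List Λ) : Set (List Λ) :=
  {w | v ++ w ∈ T}

/-- The composition `φ_w = φ_{w₁} ∘ ⋯ ∘ φ_{w_k}` for a finite word `w`. -/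
def wordMap {X : Type} {Λ : Type} (Φ : Λ → X → X) (w : List Λ) : X → X :=
  fun z => w.foldr (fun a y => Φ a y) z

/-- The coding map `γ_Φ(i) = lim_n φ_{i₁} ∘ ⋯ ∘ φ_{iₙ}(0)`. -/
def codeMap {d : ℕ} {Λ : Type} (Φ : Λ → Euc d → Euc d) (x : ℕ → Λ) : Euc d :=
  limUnder atTop (fun n => wordMap Φ (List.ofFn fun i : Fin n => x i) 0)

/-- `Γ_Φ(T) = γ_Φ(∂T)`. -/
def treeProj {d : ℕ} {Λ : Type} (Φ : Λ → Euc d → Euc d) (T : Set (List Λ)) : Set (Euc d) :=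
  codeMap Φ '' treeBoundary T

/-- The collection `S_Φ^T = {Γ_Φ(T^v) : v ∈ T}`. -/
def branchSets {d : ℕ} {Λ : Type} (Φ : Λ → Euc d → Euc d) (T : Set (List Λ)) :
    Set (Set (Euc d)) :=
  {A | ∃ v ∈ T, A = treeProj Φ (descTree T v)}

/-- `A` belongs to the closure of `S_Φ^T` in the Hausdorff metric: `A` is a non-empty compact
set which is a Hausdorff-metric limit of a sequence of sets `Γ_Φ(T^{vₙ})`, `vₙ ∈ T`. -/
def inClosureBranchSets {d : ℕ} {Λ : Type} (Φ : Λ → Euc d → Euc d) (T : Set (List Λ))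
    (A : Set (Euc d)) : Prop :=
  IsCompact A ∧ A.Nonempty ∧ ∃ v : ℕ → List Λ, (∀ n, v n ∈ T) ∧
    Tendsto (fun n => hausdorffDist (treeProj Φ (descTree T (v n))) A) atTop (nhds 0)

/-- The scaling ratio `r_w = r_{w₁} ⋯ r_{w_k}` of a word. -/
def wordRatio {Λ : Type} (r : Λ → ℝ) (w : List Λ) : ℝ := (w.map r).prod

/-- The section `Π_ρ = {w : r_w ≤ ρ < r_{w₁⋯w_{|w|-1}}}`. -/
def sectionPi {Λ : Type} (r : Λ → ℝ) (ρ : ℝ) : Set (List Λ) :=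
  {w | wordRatio r w ≤ ρ ∧ ρ < wordRatio r w.dropLast}

/-- `r_min = min_{i ∈ Λ} r_i`. -/
def rMin {Λ : Type} [Fintype Λ] [Nonempty Λ] (r : Λ → ℝ) : ℝ :=
  Finset.univ.inf' Finset.univ_nonempty r

/-- The weak separation condition: there is `c ∈ ℕ` such that for every `ρ ∈ (0, r_min)`,
every closed ball of radius `ρ` intersects at most `c` distinct sets among
`{φ_w(K) : w ∈ Π_ρ}` (identical sets counted once). -/
def SatisfiesWSC {d : ℕ} {Λ : Type} [Fintype Λ] [Nonempty Λ] (Φ : Λ → Euc d → Euc d)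
    (r : Λ → ℝ) (K : Set (Euc d)) : Prop :=
  ∃ c : ℕ, ∀ ρ : ℝ, 0 < ρ → ρ < rMin r → ∀ x : Euc d,
    ∃ V : Finset (Set (Euc d)), V.card ≤ c ∧
      ∀ w ∈ sectionPi r ρ, (wordMap Φ w '' K ∩ closedBall x ρ).Nonempty →
        wordMap Φ w '' K ∈ V

/-- The strong separation condition. -/
def SatisfiesSSC {d : ℕ} {Λ : Type} (Φ : Λ → Euc d → Euc d) (K : Set (Euc d)) : Prop :=
  ∀ i j : Λ, i ≠ j → (Φ i '' K) ∩ (Φ j '' K) = ∅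

/-- `U` is an OSC set for `Φ`. -/
def IsOSCSet {d : ℕ} {Λ : Type} (Φ : Λ → Euc d → Euc d) (U : Set (Euc d)) : Prop :=
  U.Nonempty ∧ IsOpen U ∧ (∀ i, Φ i '' U ⊆ U) ∧
    ∀ i j : Λ, i ≠ j → (Φ i '' U) ∩ (Φ j '' U) = ∅

/-- The open set condition. -/
def SatisfiesOSC {d : ℕ} {Λ : Type} (Φ : Λ → Euc d → Euc d) : Prop :=
  ∃ U : Set (Euc d), IsOSCSet Φ U

/-- `K` is the attractor of the IFS `Φ`. -/
def IsAttractor {d : ℕ} {Λ : Type} (Φ : Λ → Euc d → Euc d) (K : Set (Euc d)) : Prop :=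
  IsCompact K ∧ K.Nonempty ∧ K = ⋃ i : Λ, Φ i '' K

open Topology

/-!
Under the strong separation condition, two distinct cylinders `φ_u(K)`, `φ_v(K)` of the same
generation are at distance at least `δ r_u`. Hence if `ψ` has ratio `R` and `w` is the first
prefix of the coding of a point of the miniset `Q ∩ ψ(F)` with `R r_w ≤ L` (for a suitable constant
`L`), the whole miniset comes from the cylinder of `w`: `Q ∩ ψ(F) = Q ∩ (ψ ∘ φ_w)(Γ(T^w))`, and
`R r_w ∈ [1, L]`.
For a microset `M = lim Q ∩ ψₙ(F)`, pass to a subsequence along which the branch sets `Γ(T^{wₙ})`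
converge in the Hausdorff metric to some `A` (Blaschke selection) and the similarities
`ψₙ ∘ φ_{wₙ}` converge pointwise to a similarity `ψ` (they are affine with bounded data). Passing
to the limit gives `Q° ∩ ψ(A) ⊆ M ⊆ Q ∩ ψ(A)`; the interior is needed because points of `ψ(A)`
on `∂Q` may be limits of points of `ψₙ(Γ(T^{wₙ}))` outside `Q`.
-/

section Similarity

variable {d : ℕ} {f g : Euc d → Euc d} {s t : ℝ}

theorem IsSimilarityWithRatio.comp (hf : IsSimilarityWithRatio f s)
    (hg : IsSimilarityWithRatio g t) : IsSimilarityWithRatio (f ∘ g) (s * t) := fun x y => by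
  rw [Function.comp_apply, Function.comp_apply, hf, hg, mul_assoc]

theorem IsSimilarityWithRatio.continuous (hf : IsSimilarityWithRatio f t) (ht : 0 ≤ t) :
    Continuous f :=
  (LipschitzWith.of_dist_le_mul (K := t.toNNReal) fun x y => by
    rw [hf, Real.coe_toNNReal _ ht]).continuous

theorem IsSimilarityWithRatio.exists_eq_add_clm (hf : IsSimilarityWithRatio f t) (ht : 0 < t) :
    ∃ L : Euc d →L[ℝ] Euc d, ∀ x, f x = f 0 + L x := by
  have hiso : Isometry fun x => t⁻¹ • f x := Isometry.of_dist_eq fun x y => by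
    rw [dist_smul₀, hf, Real.norm_eq_abs, abs_inv, abs_of_pos ht, inv_mul_cancel_left₀ ht.ne']
  let L := hiso.affineIsometryOfStrictConvexSpace.linearIsometry
  have h : ∀ x, L x + t⁻¹ • f 0 = t⁻¹ • f x := fun x => by
    simpa using (hiso.affineIsometryOfStrictConvexSpace.map_vadd 0 x).symm
  refine ⟨t • L.toContinuousLinearMap, fun x => ?_⟩
  rw [smul_apply, LinearIsometry.coe_toContinuousLinearMap,
    eq_sub_of_add_eq (h x), smul_sub, smul_inv_smul₀ ht.ne', smul_inv_smul₀ ht.ne', add_sub_cancel]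

end Similarity

section Words

variable {d : ℕ} {Λ : Type} {X : Type}

@[simp] theorem wordMap_nil (Φ : Λ → X → X) : wordMap Φ [] = id := rfl

@[simp] theorem wordMap_cons (Φ : Λ → X → X) (a : Λ) (w : List Λ) :
    wordMap Φ (a :: w) = Φ a ∘ wordMap Φ w := rfl

theorem wordMap_append (Φ : Λ → X → X) (w u : List Λ) :
    wordMap Φ (w ++ u) = wordMap Φ w ∘ wordMap Φ u := by
  ext z
  simp [wordMap, List.foldr_append]

theorem wordMap_mem {Φ : Λ → X → X} {K : Set X} (hK : ∀ i, MapsTo (Φ i) K K) (w : List Λ)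
    {z : X} (hz : z ∈ K) : wordMap Φ w z ∈ K := by
  induction w with
  | nil => exact hz
  | cons a w ih => exact hK a ih

@[simp] theorem wordRatio_nil (r : Λ → ℝ) : wordRatio r [] = 1 := rfl

@[simp] theorem wordRatio_cons (r : Λ → ℝ) (a : Λ) (w : List Λ) :
    wordRatio r (a :: w) = r a * wordRatio r w := by simp [wordRatio]

theorem wordRatio_append (r : Λ → ℝ) (w u : List Λ) :
    wordRatio r (w ++ u) = wordRatio r w * wordRatio r u := by simp [wordRatio]

variable {r : Λ → ℝ}

theorem wordRatio_pos (hr : ∀ i, 0 < r i) (w : List Λ) : 0 < wordRatio r w :=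
  List.prod_pos fun _ h => by obtain ⟨i, -, rfl⟩ := List.mem_map.1 h; exact hr i

theorem wordRatio_le_pow {c : ℝ} (hr : ∀ i, 0 < r i) (hrc : ∀ i, r i ≤ c) (w : List Λ) :
    wordRatio r w ≤ c ^ w.length := by
  induction w with
  | nil => simp
  | cons a w ih =>
    rw [wordRatio_cons, List.length_cons, pow_succ']
    exact mul_le_mul (hrc a) ih (wordRatio_pos hr w).le ((hr a).le.trans (hrc a))

theorem wordRatio_append_le (hr : ∀ i, 0 < r i) (hr1 : ∀ i, r i ≤ 1) (w u : List Λ) :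
    wordRatio r (w ++ u) ≤ wordRatio r w := by
  rw [wordRatio_append]
  exact mul_le_of_le_one_right (wordRatio_pos hr w).le (by simpa using wordRatio_le_pow hr hr1 u)

theorem IsSimilarityWithRatio.wordMap {Φ : Λ → Euc d → Euc d}
    (hΦ : ∀ i, IsSimilarityWithRatio (Φ i) (r i)) (w : List Λ) :
    IsSimilarityWithRatio (wordMap Φ w) (wordRatio r w) := by
  induction w with
  | nil => intro x y; simp
  | cons a w ih => simpa using (hΦ a).comp ih

end Words

section Sequences

variable {Λ : Type}

def pref (x : ℕ → Λ) (n : ℕ) : List Λ := List.ofFn fun i : Fin n => x i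

@[simp] theorem pref_zero (x : ℕ → Λ) : pref x 0 = [] := rfl

@[simp] theorem length_pref (x : ℕ → Λ) (n : ℕ) : (pref x n).length = n := by simp [pref]

theorem pref_succ (x : ℕ → Λ) (n : ℕ) : pref x (n + 1) = pref x n ++ [x n] := by
  rw [pref, List.ofFn_succ']
  simp [pref, List.concat_eq_append]

theorem pref_add (x : ℕ → Λ) (n m : ℕ) :
    pref x (n + m) = pref x n ++ pref (fun k => x (n + k)) m := by
  induction m with
  | zero => simp
  | succ m ih => rw [← Nat.add_assoc, pref_succ, ih, pref_succ, List.append_assoc]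

theorem pref_prefix (x : ℕ → Λ) {n m : ℕ} (h : n ≤ m) : pref x n <+: pref x m := by
  obtain ⟨k, rfl⟩ := Nat.exists_eq_add_of_le h
  rw [pref_add]
  exact List.prefix_append _ _

theorem mem_treeBoundary {T : Set (List Λ)} {x : ℕ → Λ} :
    x ∈ treeBoundary T ↔ ∀ n, pref x n ∈ T := Iff.rfl

def appendSeq (w : List Λ) (j : ℕ → Λ) : ℕ → Λ :=
  fun k => if h : k < w.length then w[k] else j (k - w.length)

theorem appendSeq_length_add (w : List Λ) (j : ℕ → Λ) (k : ℕ) :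
    appendSeq w j (w.length + k) = j k := by
  simp [appendSeq]

theorem pref_appendSeq_length (w : List Λ) (j : ℕ → Λ) : pref (appendSeq w j) w.length = w := by
  conv_rhs => rw [← List.ofFn_getElem (xs := w)]
  simp [pref, appendSeq]

theorem pref_appendSeq (w : List Λ) (j : ℕ → Λ) (m : ℕ) :
    pref (appendSeq w j) (w.length + m) = w ++ pref j m := by
  rw [pref_add, pref_appendSeq_length]
  simp only [appendSeq_length_add]

theorem appendSeq_mem_treeBoundary {T : Set (List Λ)} (hT : IsTree T) {w : List Λ}
    {j : ℕ → Λ} (hj : j ∈ treeBoundary (descTree T w)) : appendSeq w j ∈ treeBoundary T :=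
  fun n => hT.2 _ (mem_treeBoundary.1 hj n) (pref _ n) <| by
    rw [← pref_appendSeq]
    exact pref_prefix _ (Nat.le_add_left n w.length)

theorem shift_mem_treeBoundary_descTree {T : Set (List Λ)} {x : ℕ → Λ}
    (hx : x ∈ treeBoundary T) (n : ℕ) :
    (fun k => x (n + k)) ∈ treeBoundary (descTree T (pref x n)) := fun m => by
  show pref x n ++ pref (fun k => x (n + k)) m ∈ T
  rw [← pref_add]
  exact hx (n + m)

end Sequences

section CodingMap

variable {d : ℕ} {Λ : Type} {Φ : Λ → Euc d → Euc d} {r : Λ → ℝ}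

theorem IsAttractor.mapsTo {K : Set (Euc d)} (hK : IsAttractor Φ K) (i : Λ) :
    MapsTo (Φ i) K K := fun z hz => by
  rw [hK.2.2]
  exact mem_iUnion.2 ⟨i, mem_image_of_mem _ hz⟩

variable [Finite Λ] [Nonempty Λ] (hΦ : ∀ i, IsContractingSimilarity (Φ i) (r i))
include hΦ

theorem exists_lt_one_forall_ratio_le : ∃ c < 1, ∀ i, r i ≤ c :=
  let ⟨i, hi⟩ := Finite.exists_max r
  ⟨r i, (hΦ i).2.1, hi⟩

theorem tendsto_wordRatio_pref (x : ℕ → Λ) :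
    Tendsto (fun n => wordRatio r (pref x n)) atTop (𝓝 0) := by
  obtain ⟨c, hc1, hrc⟩ := exists_lt_one_forall_ratio_le hΦ
  have hc0 : 0 ≤ c := (hΦ (x 0)).1.le.trans (hrc _)
  refine squeeze_zero (fun n => (wordRatio_pos (fun i => (hΦ i).1) _).le) (fun n => ?_)
    (tendsto_pow_atTop_nhds_zero_of_lt_one hc0 hc1)
  simpa using wordRatio_le_pow (fun i => (hΦ i).1) hrc (pref x n)

theorem cauchySeq_wordMap_pref (x : ℕ → Λ) :
    CauchySeq fun n => wordMap Φ (pref x n) 0 := by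
  obtain ⟨c, hc1, hrc⟩ := exists_lt_one_forall_ratio_le hΦ
  obtain ⟨i₀, hi₀⟩ := Finite.exists_max fun i => dist (0 : Euc d) (Φ i 0)
  refine cauchySeq_of_le_geometric c (dist (0 : Euc d) (Φ i₀ 0)) hc1 fun n => ?_
  have hratio := wordRatio_le_pow (fun i => (hΦ i).1) hrc (pref x n)
  rw [length_pref] at hratio
  rw [pref_succ, wordMap_append, Function.comp_apply,
    IsSimilarityWithRatio.wordMap (fun i => (hΦ i).2.2), mul_comm]
  exact mul_le_mul (by simpa using hi₀ (x n)) hratio (wordRatio_pos (fun i => (hΦ i).1) _).le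
    dist_nonneg

theorem tendsto_wordMap_pref (x : ℕ → Λ) (z : Euc d) :
    Tendsto (fun n => wordMap Φ (pref x n) z) atTop (𝓝 (codeMap Φ x)) := by
  refine (cauchySeq_wordMap_pref hΦ x).tendsto_limUnder.congr_dist ?_
  simp only [IsSimilarityWithRatio.wordMap (fun i => (hΦ i).2.2) _ 0 z]
  simpa using (tendsto_wordRatio_pref hΦ x).mul_const (dist 0 z)

theorem codeMap_eq_wordMap_pref (x : ℕ → Λ) (n : ℕ) :
    codeMap Φ x = wordMap Φ (pref x n) (codeMap Φ fun k => x (n + k)) := by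
  have hcont := (IsSimilarityWithRatio.wordMap (fun i => (hΦ i).2.2) (pref x n)).continuous
    (wordRatio_pos (fun i => (hΦ i).1) _).le
  refine tendsto_nhds_unique ((tendsto_wordMap_pref hΦ x 0).comp
    ((tendsto_add_atTop_nat n).congr fun m => Nat.add_comm m n))
    (((hcont.tendsto _).comp (tendsto_wordMap_pref hΦ _ 0)).congr fun m => ?_)
  simp only [Function.comp_apply, pref_add, wordMap_append]

theorem codeMap_appendSeq (w : List Λ) (j : ℕ → Λ) :
    codeMap Φ (appendSeq w j) = wordMap Φ w (codeMap Φ j) := by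
  simpa [pref_appendSeq_length, appendSeq_length_add] using
    codeMap_eq_wordMap_pref hΦ (appendSeq w j) w.length

variable {K : Set (Euc d)} (hK : IsAttractor Φ K)
include hK

theorem codeMap_mem (x : ℕ → Λ) : codeMap Φ x ∈ K :=
  let ⟨z, hz⟩ := hK.2.1
  hK.1.isClosed.mem_of_tendsto (tendsto_wordMap_pref hΦ x z)
    (Eventually.of_forall fun _ => wordMap_mem hK.mapsTo _ hz)

theorem codeMap_mem_image_wordMap (x : ℕ → Λ) (n : ℕ) :
    codeMap Φ x ∈ wordMap Φ (pref x n) '' K :=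
  codeMap_eq_wordMap_pref hΦ x n ▸ mem_image_of_mem _ (codeMap_mem hΦ hK _)

theorem treeProj_subset (T : Set (List Λ)) : treeProj Φ T ⊆ K :=
  image_subset_iff.2 fun x _ => codeMap_mem hΦ hK x

end CodingMap

section TreeProjection

variable {d : ℕ} {Λ : Type} [Finite Λ] [Nonempty Λ] {Φ : Λ → Euc d → Euc d} {r : Λ → ℝ}
  (hΦ : ∀ i, IsContractingSimilarity (Φ i) (r i)) {T : Set (List Λ)}
include hΦ

theorem image_wordMap_treeProj_descTree_subset (hT : IsTree T) (w : List Λ) :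
    wordMap Φ w '' treeProj Φ (descTree T w) ⊆ treeProj Φ T := by
  rintro _ ⟨_, ⟨j, hj, rfl⟩, rfl⟩
  exact ⟨appendSeq w j, appendSeq_mem_treeBoundary hT hj, codeMap_appendSeq hΦ w j⟩

theorem codeMap_mem_image_treeProj_descTree {x : ℕ → Λ} (hx : x ∈ treeBoundary T) (n : ℕ) :
    codeMap Φ x ∈ wordMap Φ (pref x n) '' treeProj Φ (descTree T (pref x n)) :=
  codeMap_eq_wordMap_pref hΦ x n ▸
    mem_image_of_mem _ (mem_image_of_mem _ (shift_mem_treeBoundary_descTree hx n))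

end TreeProjection

theorem List.exists_eq_append_cons_of_length_eq {α : Type*} {w u : List α}
    (hlen : w.length = u.length) (hne : w ≠ u) :
    ∃ (p : List α) (a b : α) (w' u' : List α), a ≠ b ∧ w = p ++ a :: w' ∧ u = p ++ b :: u' := by
  induction w generalizing u with
  | nil => exact absurd (List.length_eq_zero_iff.1 hlen.symm).symm hne
  | cons c w ih =>
    obtain _ | ⟨c', u⟩ := u
    · simp at hlen
    by_cases hc : c = c'
    · subst hc
      obtain ⟨p, a, b, w', u', hab, rfl, rfl⟩ :=
        ih (Nat.succ_injective hlen) fun h => hne (h ▸ rfl)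
      exact ⟨c :: p, a, b, w', u', hab, rfl, rfl⟩
    · exact ⟨[], c, c', w, u, hc, rfl, rfl⟩

section Separation

variable {d : ℕ} {Λ : Type} {Φ : Λ → Euc d → Euc d} {r : Λ → ℝ} {K : Set (Euc d)}

theorem exists_pos_forall_le_dist_of_SSC [Finite Λ] (hΦ : ∀ i, Continuous (Φ i))
    (hK : IsCompact K) (hSSC : SatisfiesSSC Φ K) :
    ∃ δ > 0, ∀ i j, i ≠ j → ∀ x ∈ Φ i '' K, ∀ y ∈ Φ j '' K, δ ≤ dist x y := by
  have hpair : ∀ p : Λ × Λ, ∀ᶠ δ in 𝓝[>] (0 : ℝ),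
      p.1 ≠ p.2 → ∀ x ∈ Φ p.1 '' K, ∀ y ∈ Φ p.2 '' K, δ ≤ dist x y := by
    rintro ⟨i, j⟩
    by_cases hij : i = j
    · exact Eventually.of_forall fun _ h => absurd hij h
    obtain ⟨δ, hδ, hsep⟩ := exists_pos_forall_lt_edist (hK.image (hΦ i))
      (hK.image (hΦ j)).isClosed (disjoint_iff_inter_eq_empty.2 (hSSC i j hij))
    filter_upwards [Ioc_mem_nhdsGT hδ] with ε hε _ x hx y hy
    have := hsep x hx y hy
    rw [edist_nndist, ENNReal.coe_lt_coe, ← NNReal.coe_lt_coe, coe_nndist] at this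
    exact hε.2.trans this.le
  obtain ⟨δ, hδ, hδ0⟩ := ((eventually_all.2 hpair).and self_mem_nhdsWithin).exists
  exact ⟨δ, hδ0, fun i j hij => hδ (i, j) hij⟩

theorem le_dist_of_length_eq (hΦ : ∀ i, IsContractingSimilarity (Φ i) (r i))
    (hK : IsAttractor Φ K) {δ : ℝ} (hδ0 : 0 ≤ δ)
    (hδ : ∀ i j, i ≠ j → ∀ x ∈ Φ i '' K, ∀ y ∈ Φ j '' K, δ ≤ dist x y)
    {w u : List Λ} (hlen : w.length = u.length) (hne : w ≠ u) {x y : Euc d}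
    (hx : x ∈ wordMap Φ w '' K) (hy : y ∈ wordMap Φ u '' K) :
    δ * wordRatio r w ≤ dist x y := by
  have hr : ∀ i, 0 < r i := fun i => (hΦ i).1
  obtain ⟨p, a, b, w', u', hab, rfl, rfl⟩ := List.exists_eq_append_cons_of_length_eq hlen hne
  obtain ⟨x, hx, rfl⟩ := hx
  obtain ⟨y, hy, rfl⟩ := hy
  simp only [wordMap_append, wordMap_cons, Function.comp_apply]
  rw [IsSimilarityWithRatio.wordMap (fun i => (hΦ i).2.2), mul_comm]
  calc wordRatio r (p ++ a :: w') * δ ≤ wordRatio r p * δ :=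
        mul_le_mul_of_nonneg_right (wordRatio_append_le hr (fun i => (hΦ i).2.1.le) _ _) hδ0
    _ ≤ _ := mul_le_mul_of_nonneg_left (hδ a b hab _ (mem_image_of_mem _
        (wordMap_mem hK.mapsTo _ hx)) _ (mem_image_of_mem _ (wordMap_mem hK.mapsTo _ hy)))
        (wordRatio_pos hr p).le

end Separation

theorem isCompact_unitCube (d : ℕ) : IsCompact (unitCube d) := by
  have : unitCube d = WithLp.toLp 2 '' Set.univ.pi fun _ : Fin d => Icc (0 : ℝ) 1 := by
    ext x
    refine ⟨fun h => ⟨x.ofLp, fun i _ => h i, rfl⟩, ?_⟩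
    rintro ⟨y, hy, rfl⟩ i
    exact hy i trivial
  rw [this]
  exact (isCompact_univ_pi fun _ => isCompact_Icc).image (PiLp.continuous_toLp 2 _)

section Zoom

variable {d : ℕ} {Λ : Type} [Fintype Λ] [Nonempty Λ] {Φ : Λ → Euc d → Euc d} {r : Λ → ℝ}

theorem rMin_le (r : Λ → ℝ) (i : Λ) : rMin r ≤ r i :=
  Finset.inf'_le r (Finset.mem_univ i)

variable (hΦ : ∀ i, IsContractingSimilarity (Φ i) (r i))
include hΦ

theorem rMin_pos : 0 < rMin r :=
  (Finset.lt_inf'_iff _).2 fun i _ => (hΦ i).1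

theorem exists_pref_wordRatio_le (x : ℕ → Λ) {ρ : ℝ} (hρ : 0 < ρ) :
    ∃ n, wordRatio r (pref x n) ≤ ρ ∧ ∀ m < n, ρ < wordRatio r (pref x m) := by
  classical
  have hex : ∃ n, wordRatio r (pref x n) ≤ ρ :=
    ((tendsto_wordRatio_pref hΦ x).eventually (ge_mem_nhds hρ)).exists
  exact ⟨Nat.find hex, Nat.find_spec hex, fun m hm => not_le.1 (Nat.find_min hex hm)⟩

theorem wordRatio_pref_mul_rMin_le (x : ℕ → Λ) (m : ℕ) :
    wordRatio r (pref x m) * rMin r ≤ wordRatio r (pref x (m + 1)) := by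
  rw [pref_succ, wordRatio_append, wordRatio_cons, wordRatio_nil, mul_one]
  exact mul_le_mul_of_nonneg_left (rMin_le r (x m)) (wordRatio_pos (fun i => (hΦ i).1) _).le

theorem exists_inter_image_treeProj_eq {K : Set (Euc d)} (hK : IsAttractor Φ K) {δ : ℝ}
    (hδ0 : 0 < δ) (hδ : ∀ i j, i ≠ j → ∀ x ∈ Φ i '' K, ∀ y ∈ Φ j '' K, δ ≤ dist x y)
    {Q : Set (Euc d)} (hQ : Bornology.IsBounded Q) {L : ℝ} (hL1 : 1 ≤ L * rMin r)
    (hLδ : diam Q < δ * (L * rMin r)) {T : Set (List Λ)} (hT : IsTree T)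
    {ψ : Euc d → Euc d} {R : ℝ} (hR : 1 ≤ R) (hψ : IsSimilarityWithRatio ψ R)
    (hne : (Q ∩ ψ '' treeProj Φ T).Nonempty) :
    ∃ w ∈ T, R * wordRatio r w ∈ Icc 1 L ∧
      Q ∩ ψ '' treeProj Φ T = Q ∩ (ψ ∘ wordMap Φ w) '' treeProj Φ (descTree T w) := by
  obtain ⟨_, hx₀Q, _, ⟨x₀, hx₀, rfl⟩, rfl⟩ := hne
  have hR0 : 0 < R := one_pos.trans_le hR
  have hrMin : 0 < rMin r := rMin_pos hΦ
  have hL0 : 0 < L := pos_of_mul_pos_left (one_pos.trans_le hL1) hrMin.le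
  obtain ⟨n, hn, hmin⟩ := exists_pref_wordRatio_le hΦ x₀ (div_pos hL0 hR0)
  set w := pref x₀ n
  have hlow : n ≠ 0 → L * rMin r < R * wordRatio r w := fun hn0 => by
    obtain ⟨m, rfl⟩ := Nat.exists_eq_succ_of_ne_zero hn0
    have := mul_lt_mul_of_pos_right ((div_lt_iff₀' hR0).1 (hmin m m.lt_succ_self)) hrMin
    nlinarith [wordRatio_pref_mul_rMin_le hΦ x₀ m]
  -- points of distinct cylinders of generation `n` are sent by `ψ` more than `diam Q` apart
  have hcut : ∀ x ∈ treeBoundary T, ψ (codeMap Φ x) ∈ Q → pref x n = w := by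
    intro x hx hxQ
    by_contra hne
    have hn0 : n ≠ 0 := by rintro rfl; exact hne rfl
    have hsep := le_dist_of_length_eq hΦ hK hδ0.le hδ (by simp [w]) (Ne.symm hne)
      (codeMap_mem_image_wordMap hΦ hK x₀ n) (codeMap_mem_image_wordMap hΦ hK x n)
    have hdiam := dist_le_diam_of_mem hQ hx₀Q hxQ
    rw [hψ] at hdiam
    nlinarith [mul_lt_mul_of_pos_left (hlow hn0) hδ0]
  refine ⟨w, hx₀ n, ⟨?_, ?_⟩, Subset.antisymm ?_ ?_⟩
  · rcases eq_or_ne n 0 with rfl | hn0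
    · simpa [w] using hR
    · exact hL1.trans (hlow hn0).le
  · simpa [le_div_iff₀' hR0] using hn
  · rintro _ ⟨hxQ, _, ⟨x, hx, rfl⟩, rfl⟩
    refine ⟨hxQ, ?_⟩
    rw [image_comp, ← hcut x hx hxQ]
    exact mem_image_of_mem _ (codeMap_mem_image_treeProj_descTree hΦ hx n)
  · rw [image_comp]
    exact inter_subset_inter_right _
      (image_mono (image_wordMap_treeProj_descTree_subset hΦ hT w))

theorem exists_forall_isMiniset_eq_inter_image_descTree {K : Set (Euc d)}
    (hK : IsAttractor Φ K) (hSSC : SatisfiesSSC Φ K) {T : Set (List Λ)} (hT : IsTree T) :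
    ∃ L, ∀ B, IsMiniset (treeProj Φ T) B → ∃ w ∈ T, ∃ (χ : Euc d → Euc d) (t : ℝ),
      t ∈ Icc 1 L ∧ IsSimilarityWithRatio χ t ∧
        B = unitCube d ∩ χ '' treeProj Φ (descTree T w) := by
  obtain ⟨δ, hδ0, hδ⟩ := exists_pos_forall_le_dist_of_SSC
    (fun i => (hΦ i).2.2.continuous (hΦ i).1.le) hK.1 hSSC
  set L := max 1 ((diam (unitCube d) + 1) / δ) / rMin r
  have hL : L * rMin r = max 1 ((diam (unitCube d) + 1) / δ) :=
    div_mul_cancel₀ _ (rMin_pos hΦ).ne'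
  refine ⟨L, fun B ⟨hBne, ψ, ⟨R, hR, hψ⟩, hBψ⟩ => ?_⟩
  obtain ⟨w, hw, ht, heq⟩ := exists_inter_image_treeProj_eq hΦ hK hδ0 hδ
    (isCompact_unitCube d).isBounded (hL ▸ le_max_left _ _)
    ((lt_add_one _).trans_le (by rw [hL, ← div_le_iff₀' hδ0]; exact le_max_right _ _))
    hT hR hψ (hBψ ▸ hBne)
  exact ⟨w, hw, _, _, ht, hψ.comp (.wordMap (fun i => (hΦ i).2.2) w), hBψ.trans heq⟩

end Zoom

section HausdorffLimits

variable {E : Type*} [MetricSpace E]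

theorem exists_tendsto_of_hausdorffDist_tendsto_zero {S : ℕ → Set E} {A : Set E} {x : E}
    (hx : x ∈ A) (hfin : ∀ n, hausdorffEDist (S n) A ≠ ⊤)
    (hS : Tendsto (fun n => hausdorffDist (S n) A) atTop (𝓝 0)) :
    ∃ p : ℕ → E, (∀ n, p n ∈ S n) ∧ Tendsto p atTop (𝓝 x) := by
  have hclose : ∀ n : ℕ, ∃ y ∈ S n, dist y x < hausdorffDist (S n) A + 1 / (n + 1) := fun n =>
    exists_dist_lt_of_hausdorffDist_lt' hx (lt_add_of_pos_right _ Nat.one_div_pos_of_nat) (hfin n)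
  choose p hpS hpx using hclose
  refine ⟨p, hpS, tendsto_iff_dist_tendsto_zero.2 ?_⟩
  have hlim := hS.add tendsto_one_div_add_atTop_nhds_zero_nat
  rw [zero_add] at hlim
  exact squeeze_zero (fun _ => dist_nonneg) (fun n => (hpx n).le) hlim

theorem mem_of_tendsto_of_hausdorffDist_tendsto_zero {ι : Type*} {l : Filter ι} [l.NeBot]
    {S : ι → Set E} {A : Set E} {p : ι → E} {x : E} (hA : IsClosed A)
    (hfin : ∀ i, hausdorffEDist (S i) A ≠ ⊤)
    (hS : Tendsto (fun i => hausdorffDist (S i) A) l (𝓝 0))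
    (hp : Tendsto p l (𝓝 x)) (hpS : ∀ᶠ i in l, p i ∈ S i) : x ∈ A := by
  obtain ⟨i, hi⟩ := hpS.exists
  have hAne : A.Nonempty := nonempty_of_hausdorffEDist_ne_top ⟨_, hi⟩ (hfin i)
  have hinf : Tendsto (fun i => infDist (p i) A) l (𝓝 (infDist x A)) :=
    (continuous_infDist_pt A).continuousAt.tendsto.comp hp
  have hle : infDist x A ≤ 0 := le_of_tendsto_of_tendsto hinf hS <|
    hpS.mono fun i hi => infDist_le_hausdorffDist_of_mem hi (hfin i)
  rw [← hA.closure_eq, mem_closure_iff_infDist_zero hAne]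
  exact le_antisymm hle infDist_nonneg

theorem tendsto_apply_of_tendsto_of_lipschitz {ι : Type*} {l : Filter ι} {F : Type*}
    [PseudoMetricSpace F] {f : ι → E → F} {g : E → F} {C : ℝ}
    (hf : ∀ i x y, dist (f i x) (f i y) ≤ C * dist x y)
    (hfg : ∀ x, Tendsto (fun i => f i x) l (𝓝 (g x))) {p : ι → E} {x : E}
    (hp : Tendsto p l (𝓝 x)) : Tendsto (fun i => f i (p i)) l (𝓝 (g x)) := by
  rw [tendsto_iff_dist_tendsto_zero] at hp ⊢
  have hlim := (hp.const_mul C).add (tendsto_iff_dist_tendsto_zero.1 (hfg x))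
  rw [mul_zero, zero_add] at hlim
  refine squeeze_zero (fun _ => dist_nonneg) (fun i => ?_) hlim
  calc dist (f i (p i)) (g x) ≤ dist (f i (p i)) (f i x) + dist (f i x) (g x) :=
        dist_triangle _ _ _
    _ ≤ C * dist (p i) x + dist (f i x) (g x) := by gcongr; exact hf i _ _

variable {Q M A : Set E} {G B : ℕ → Set E} {χ : ℕ → E → E} {χ' : E → E} {C : ℝ}

theorem interior_inter_image_subset_of_tendsto (hM : IsClosed M)
    (hB : ∀ n, B n = Q ∩ χ n '' G n) (hBfin : ∀ n, hausdorffEDist (B n) M ≠ ⊤)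
    (hBM : Tendsto (fun n => hausdorffDist (B n) M) atTop (𝓝 0))
    (hGfin : ∀ n, hausdorffEDist (G n) A ≠ ⊤)
    (hGA : Tendsto (fun n => hausdorffDist (G n) A) atTop (𝓝 0))
    (hχ : ∀ n x y, dist (χ n x) (χ n y) ≤ C * dist x y)
    (hχχ' : ∀ x, Tendsto (fun n => χ n x) atTop (𝓝 (χ' x))) :
    interior Q ∩ χ' '' A ⊆ M := by
  rintro _ ⟨hQ, a, ha, rfl⟩
  obtain ⟨p, hpG, hpa⟩ := exists_tendsto_of_hausdorffDist_tendsto_zero ha hGfin hGA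
  have hlim := tendsto_apply_of_tendsto_of_lipschitz hχ hχχ' hpa
  refine mem_of_tendsto_of_hausdorffDist_tendsto_zero hM hBfin hBM hlim ?_
  filter_upwards [hlim.eventually (isOpen_interior.mem_nhds hQ)] with n hn
  rw [hB]
  exact ⟨interior_subset hn, p n, hpG n, rfl⟩

theorem subset_inter_image_of_tendsto {K : Set E} (hK : IsCompact K) (hGK : ∀ n, G n ⊆ K)
    (hQ : IsClosed Q) (hA : IsClosed A)
    (hB : ∀ n, B n = Q ∩ χ n '' G n) (hBfin : ∀ n, hausdorffEDist (B n) M ≠ ⊤)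
    (hBM : Tendsto (fun n => hausdorffDist (B n) M) atTop (𝓝 0))
    (hGfin : ∀ n, hausdorffEDist (G n) A ≠ ⊤)
    (hGA : Tendsto (fun n => hausdorffDist (G n) A) atTop (𝓝 0))
    (hχ : ∀ n x y, dist (χ n x) (χ n y) ≤ C * dist x y)
    (hχχ' : ∀ x, Tendsto (fun n => χ n x) atTop (𝓝 (χ' x))) :
    M ⊆ Q ∩ χ' '' A := by
  intro x hx
  obtain ⟨y, hyB, hyx⟩ := exists_tendsto_of_hausdorffDist_tendsto_zero hx hBfin hBM
  have hyB' : ∀ n, y n ∈ Q ∧ ∃ z ∈ G n, χ n z = y n := fun n => by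
    simpa only [hB, mem_inter_iff, mem_image] using hyB n
  choose hyQ z hzG hzy using hyB'
  obtain ⟨z', -, φ, hφ, hzz'⟩ := hK.tendsto_subseq fun n => hGK n (hzG n)
  have hz'A : z' ∈ A := mem_of_tendsto_of_hausdorffDist_tendsto_zero hA (fun n => hGfin (φ n))
    (hGA.comp hφ.tendsto_atTop) hzz' (Eventually.of_forall fun n => hzG (φ n))
  have hlim := tendsto_apply_of_tendsto_of_lipschitz (fun n => hχ (φ n))
    (fun x => (hχχ' x).comp hφ.tendsto_atTop) hzz'
  simp only [Function.comp_apply, hzy] at hlim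
  refine ⟨hQ.mem_of_tendsto hyx (Eventually.of_forall hyQ), z', hz'A, ?_⟩
  exact tendsto_nhds_unique hlim (hyx.comp hφ.tendsto_atTop)

theorem inter_image_subset_and_subset_of_tendsto {K : Set E} (hK : IsCompact K)
    (hGK : ∀ n, G n ⊆ K) (hQ : IsCompact Q) (hM : IsCompact M) (hMne : M.Nonempty)
    (hA : IsCompact A) (hAne : A.Nonempty) (hB : ∀ n, B n = Q ∩ χ n '' G n)
    (hBne : ∀ n, (B n).Nonempty) (hBM : Tendsto (fun n => hausdorffDist (B n) M) atTop (𝓝 0))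
    (hGA : Tendsto (fun n => hausdorffDist (G n) A) atTop (𝓝 0))
    (hχ : ∀ n x y, dist (χ n x) (χ n y) ≤ C * dist x y)
    (hχχ' : ∀ x, Tendsto (fun n => χ n x) atTop (𝓝 (χ' x))) :
    interior Q ∩ χ' '' A ⊆ M ∧ M ⊆ Q ∩ χ' '' A := by
  have hBfin : ∀ n, hausdorffEDist (B n) M ≠ ⊤ := fun n =>
    hausdorffEDist_ne_top_of_nonempty_of_bounded (hBne n) hMne
      (hQ.isBounded.subset (hB n ▸ inter_subset_left)) hM.isBounded
  have hGfin : ∀ n, hausdorffEDist (G n) A ≠ ⊤ := fun n =>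
    hausdorffEDist_ne_top_of_nonempty_of_bounded
      ((hB n ▸ hBne n).mono inter_subset_right).of_image hAne
      (hK.isBounded.subset (hGK n)) hA.isBounded
  exact ⟨interior_inter_image_subset_of_tendsto hM.isClosed hB hBfin hBM hGfin hGA hχ hχχ',
    subset_inter_image_of_tendsto hK hGK hQ.isClosed hA.isClosed hB hBfin hBM hGfin hGA hχ hχχ'⟩

end HausdorffLimits

section Compactness

theorem exists_subseq_hausdorffDist_tendsto_zero {E : Type*} [MetricSpace E] {K : Set E}
    (hK : IsCompact K) {G : ℕ → Set E} (hGK : ∀ n, G n ⊆ K) (hG : ∀ n, (G n).Nonempty) :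
    ∃ (A : Set E) (φ : ℕ → ℕ), StrictMono φ ∧ IsCompact A ∧ A.Nonempty ∧
      Tendsto (fun n => hausdorffDist (G (φ n)) A) atTop (𝓝 0) := by
  let G' : ℕ → TopologicalSpace.NonemptyCompacts E := fun n =>
    ⟨⟨closure (G n), hK.of_isClosed_subset isClosed_closure
      (closure_minimal (hGK n) hK.isClosed)⟩, (hG n).closure⟩
  obtain ⟨A, -, φ, hφ, hlim⟩ :=
    (TopologicalSpace.NonemptyCompacts.isCompact_subsets_of_isCompact hK).tendsto_subseq
      (x := G') fun n => closure_minimal (hGK n) hK.isClosed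
  refine ⟨A, φ, hφ, A.isCompact, A.nonempty, ?_⟩
  have := tendsto_iff_dist_tendsto_zero.1 hlim
  simpa only [Function.comp_apply, NonemptyCompacts.dist_eq, G',
    TopologicalSpace.NonemptyCompacts.coe_mk, TopologicalSpace.Compacts.coe_mk,
    hausdorffDist_closure₁] using this

variable {d : ℕ}

theorem exists_subseq_tendsto_similarity {χ : ℕ → Euc d → Euc d} {t : ℕ → ℝ} {a b : ℝ}
    (ha : 0 < a) (hχ : ∀ n, IsSimilarityWithRatio (χ n) (t n)) (ht : ∀ n, t n ∈ Icc a b)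
    {K Q : Set (Euc d)} (hK : Bornology.IsBounded K) (hQ : Bornology.IsBounded Q)
    (hKQ : ∀ n, ∃ z ∈ K, χ n z ∈ Q) :
    ∃ (χ' : Euc d → Euc d) (t' : ℝ) (φ : ℕ → ℕ), StrictMono φ ∧ t' ∈ Icc a b ∧
      IsSimilarityWithRatio χ' t' ∧ ∀ x, Tendsto (fun n => χ (φ n) x) atTop (𝓝 (χ' x)) := by
  -- The topology of pointwise convergence on `Euc d → Euc d` is not first countable, so extract
  -- from the affine data `(χ n 0, L n, t n)`, which ranges in a compact set.
  have ht0 : ∀ n, 0 ≤ t n := fun n => ha.le.trans (ht n).1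
  choose L hL using fun n => (hχ n).exists_eq_add_clm (ha.trans_le (ht n).1)
  have hL_apply : ∀ n x, ‖L n x‖ = t n * ‖x‖ := fun n x => by
    have := hχ n x 0
    rwa [dist_eq_norm, dist_eq_norm, hL n x, add_sub_cancel_left, sub_zero] at this
  have hL_norm : ∀ n, ‖L n‖ ≤ b := fun n =>
    ((L n).opNorm_le_bound (ht0 n) fun x => (hL_apply n x).le).trans (ht n).2
  obtain ⟨CK, -, hCK⟩ := hK.exists_pos_norm_le
  obtain ⟨CQ, hCQ⟩ := isBounded_iff_forall_norm_le.1 hQ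
  have hχ0 : ∀ n, ‖χ n 0‖ ≤ CQ + b * CK := fun n => by
    obtain ⟨z, hzK, hzQ⟩ := hKQ n
    calc ‖χ n 0‖ = ‖χ n z - L n z‖ := by rw [hL n z, add_sub_cancel_right]
      _ ≤ ‖χ n z‖ + ‖L n z‖ := norm_sub_le _ _
      _ ≤ CQ + b * CK := by
        rw [hL_apply]
        exact add_le_add (hCQ _ hzQ)
          (mul_le_mul (ht n).2 (hCK z hzK) (norm_nonneg _) ((ht0 n).trans (ht n).2))
  have hS : IsCompact (closedBall (0 : Euc d) (CQ + b * CK) ×ˢ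
      closedBall (0 : Euc d →L[ℝ] Euc d) b ×ˢ Icc a b) :=
    (isCompact_closedBall _ _).prod ((isCompact_closedBall _ _).prod isCompact_Icc)
  obtain ⟨⟨c, L', t'⟩, ⟨-, -, ht'⟩, φ, hφ, hlim⟩ :=
    hS.tendsto_subseq (x := fun n => (χ n 0, L n, t n)) fun n =>
      ⟨mem_closedBall_zero_iff.2 (hχ0 n), mem_closedBall_zero_iff.2 (hL_norm n), ht n⟩
  have hpt : ∀ x, Tendsto (fun n => χ (φ n) x) atTop (𝓝 (c + L' x)) := fun x => by
    have hcont : Continuous fun p : Euc d × (Euc d →L[ℝ] Euc d) × ℝ => p.1 + p.2.1 x := by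
      fun_prop
    exact ((hcont.tendsto _).comp hlim).congr fun n => (hL (φ n) x).symm
  refine ⟨fun x => c + L' x, t', φ, hφ, ht', fun x y => ?_, hpt⟩
  have ht_lim : Tendsto (fun n => t (φ n)) atTop (𝓝 t') :=
    ((continuous_snd.comp continuous_snd).tendsto _).comp hlim
  refine tendsto_nhds_unique ((hpt x).dist (hpt y)) ?_
  exact (ht_lim.mul_const _).congr fun n => (hχ (φ n) x y).symm

end Compactness

theorem stmt1_general {d : ℕ} {Λ : Type} [Fintype Λ] [Nonempty Λ]
    (Φ : Λ → Euc d → Euc d) (r : Λ → ℝ)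
    (hΦ : ∀ i, IsContractingSimilarity (Φ i) (r i))
    (K : Set (Euc d)) (hK : IsAttractor Φ K)
    (hSSC : SatisfiesSSC Φ K)
    (F : Set (Euc d))
    (T : Set (List Λ)) (hT : IsTree T)
    (hFT : F = treeProj Φ T) :
    ∀ M : Set (Euc d), IsMicroset F M →
      ∃ (A : Set (Euc d)) (ψ : Euc d → Euc d),
        inClosureBranchSets Φ T A ∧ IsExpandingSimilarity ψ ∧
        interior (unitCube d) ∩ ψ '' A ⊆ M ∧ M ⊆ unitCube d ∩ ψ '' A := by
  subst hFT
  rintro M ⟨hMc, hMne, B, hBmini, hBM⟩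
  have hQ := isCompact_unitCube d
  obtain ⟨L, hL⟩ := exists_forall_isMiniset_eq_inter_image_descTree hΦ hK hSSC hT
  choose w hwT χ t ht hχ hB using fun n => hL (B n) (hBmini n)
  have hBne : ∀ n, (B n).Nonempty := fun n => (hBmini n).1
  obtain ⟨A, φ, hφ, hAc, hAne, hGA⟩ := exists_subseq_hausdorffDist_tendsto_zero hK.1
    (fun n => treeProj_subset hΦ hK (descTree T (w n)))
    (fun n => ((hB n ▸ hBne n).mono inter_subset_right).of_image)
  obtain ⟨χ', t', φ', hφ', ht', hχ', hlim⟩ := exists_subseq_tendsto_similarity one_pos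
    (fun n => hχ (φ n)) (fun n => ht (φ n)) hK.1.isBounded hQ.isBounded fun n => by
      obtain ⟨_, hq, z, hz, rfl⟩ := hB (φ n) ▸ hBne (φ n)
      exact ⟨z, treeProj_subset hΦ hK _ hz, hq⟩
  refine ⟨A, χ', ⟨hAc, hAne, fun n => w (φ (φ' n)), fun n => hwT _, hGA.comp hφ'.tendsto_atTop⟩,
    ⟨t', ht'.1, hχ'⟩, inter_image_subset_and_subset_of_tendsto hK.1
      (fun n => treeProj_subset hΦ hK _) hQ hMc hMne hAc hAne (fun n => hB _) (fun n => hBne _)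
      (hBM.comp (hφ.comp hφ').tendsto_atTop) (hGA.comp hφ'.tendsto_atTop)
      (fun n x y => (hχ _ x y).trans_le (mul_le_mul_of_nonneg_right (ht _).2 dist_nonneg)) hlim⟩

theorem stmt1 {d : ℕ} {Λ : Type} [Fintype Λ] [Nonempty Λ]
    (Φ : Λ → Euc d → Euc d) (r : Λ → ℝ)
    (hΦ : ∀ i, IsContractingSimilarity (Φ i) (r i))
    (K : Set (Euc d)) (hK : IsAttractor Φ K)
    (hSSC : SatisfiesSSC Φ K)
    (F : Set (Euc d)) (hFc : IsCompact F) (hFne : F.Nonempty)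
    (T : Set (List Λ)) (hT : IsTree T) (hTnl : HasNoLeaves T)
    (hFT : F = treeProj Φ T) :
    ∀ M : Set (Euc d), IsMicroset F M →
      ∃ (A : Set (Euc d)) (ψ : Euc d → Euc d),
        inClosureBranchSets Φ T A ∧ IsExpandingSimilarity ψ ∧
        interior (unitCube d) ∩ ψ '' A ⊆ M ∧ M ⊆ unitCube d ∩ ψ '' A :=
  stmt1_general Φ r hΦ K hK hSSC F T hT hFT
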